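/- Let B be a finite skew left brace. Then Pb(B) = 5/8 if and only if [B : Ann(B)] = 4 and |Cb_B(x)| = |B|/2 for every x ∈ B \ Ann(B). -/
import Mathlib
set_option linter.unusedSectionVars false


/-- A skew left brace structure on a type carrying both an additive and a
multiplicative group structure: the compatibility (skew left distributivity)
`a ∘ (b + c) = (a ∘ b) - a + (a ∘ c)` holds, and the two identities coincide. -/
class SkewBrace (B : Type*) [AddGroup B] [Group B] : Prop where
  compat : ∀ a b c : B, a * (b + c) = a * b + -a + a * c
  zero_eq_one : (0 : B) = 1

section Defs

variable {B : Type*} [AddGroup B] [Group B]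

/-- `λ_a(b) = -a + (a ∘ b)`. -/
def lambdaMap (a b : B) : B := -a + a * b

/-- `a * b := -a + (a ∘ b) - b` (the star product of a skew brace). -/
def starOp (a b : B) : B := -a + a * b + -b

/-- The additive commutator `[a,b]⁺ = a + b - a - b`. -/
def addComB (a b : B) : B := a + b + -a + -b

/-- The multiplicative commutator `[a,b]∘ = a ∘ b ∘ a⁻¹ ∘ b⁻¹`. -/
def mulComB (a b : B) : B := a * b * a⁻¹ * b⁻¹

/-- The brace centralizer `Cb_B(x) = {b | x*b = b*x = [x,b]⁺ = 1}`. -/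
def Cb (x : B) : Set B := {b | starOp x b = 0 ∧ starOp b x = 0 ∧ addComB x b = 0}

/-- The annihilator `Ann(B) = Ker λ ∩ Z(B,+) ∩ Z(B,∘)` as a set. -/
def AnnSet (B : Type*) [AddGroup B] [Group B] : Set B :=
  {a | (∀ b : B, a + b = a * b) ∧ (∀ b : B, a + b = b + a) ∧ (∀ b : B, a * b = b * a)}

/-- A sub-skew brace: a subset closed under both group operations and inverses. -/
def IsSubSkewBrace (H : Set B) : Prop :=
  (0 : B) ∈ H ∧ (∀ a ∈ H, ∀ b ∈ H, a + b ∈ H) ∧ (∀ a ∈ H, -a ∈ H) ∧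
    (∀ a ∈ H, ∀ b ∈ H, a * b ∈ H) ∧ (∀ a ∈ H, a⁻¹ ∈ H)

/-- The commuting probability of a (finite) skew brace. -/
noncomputable def Pb (B : Type*) [AddGroup B] [Group B] : ℚ :=
  (Nat.card {p : B × B //
      starOp p.1 p.2 = 0 ∧ starOp p.2 p.1 = 0 ∧ addComB p.1 p.2 = 0} : ℚ)
    / (Nat.card B : ℚ) ^ 2

/-- The commuting probability of a sub-skew brace `H` of `B`. -/
noncomputable def PbSub (H : Set B) : ℚ :=
  (Nat.card {p : B × B // p.1 ∈ H ∧ p.2 ∈ H ∧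
      starOp p.1 p.2 = 0 ∧ starOp p.2 p.1 = 0 ∧ addComB p.1 p.2 = 0} : ℚ)
    / (Nat.card H : ℚ) ^ 2

end Defs


section Aux

variable {B : Type*} [AddGroup B] [Group B] [SkewBrace B]

lemma sb_compat (a b c : B) : a * (b + c) = a * b + -a + a * c := SkewBrace.compat a b c

lemma sbMulZero (a : B) : a * (0 : B) = a := by rw [SkewBrace.zero_eq_one, mul_one]

lemma sbZeroMul (a : B) : (0 : B) * a = a := by rw [SkewBrace.zero_eq_one, one_mul]

lemma lam_add (a b c : B) : lambdaMap a (b + c) = lambdaMap a b + lambdaMap a c := by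
  simp only [lambdaMap, sb_compat, add_assoc]

lemma lam_zero (a : B) : lambdaMap a (0 : B) = 0 := by
  rw [lambdaMap, sbMulZero, neg_add_cancel]

lemma lam_neg (a b : B) : lambdaMap a (-b) = -(lambdaMap a b) := by
  have h : lambdaMap a b + lambdaMap a (-b) = 0 := by
    rw [← lam_add, add_neg_cancel, lam_zero]
  exact (neg_eq_of_add_eq_zero_right h).symm

lemma mul_eq_add_lam (a b : B) : a * b = a + lambdaMap a b := by
  rw [lambdaMap, add_neg_cancel_left]

lemma lam_mul (a b c : B) : lambdaMap (a * b) c = lambdaMap a (lambdaMap b c) := by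
  have h : lambdaMap a (lambdaMap b c) = lambdaMap a (-b) + lambdaMap a (b * c) := by
    rw [← lam_add]; rfl
  rw [h, lam_neg]
  simp only [lambdaMap, mul_assoc, neg_add_rev, neg_neg, add_assoc, neg_add_cancel_left, add_neg_cancel_left]

lemma starOp_eq_zero_iff {a b : B} : starOp a b = 0 ↔ a * b = a + b := by
  unfold starOp
  constructor
  · intro h
    have h2 := congrArg (fun t => a + t + b) h
    simpa [add_assoc] using h2
  · intro h
    simp [h, add_assoc]

lemma addComB_eq_zero_iff {a b : B} : addComB a b = 0 ↔ a + b = b + a := by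
  unfold addComB
  constructor
  · intro h
    have h2 := congrArg (fun t => t + b + a) h
    simpa [add_assoc] using h2
  · intro h
    simp [h, add_assoc]

lemma mem_Cb_iff {x b : B} :
    b ∈ Cb x ↔ x * b = x + b ∧ b * x = b + x ∧ x + b = b + x := by
  simp only [Cb, Set.mem_setOf_eq, starOp_eq_zero_iff, addComB_eq_zero_iff]

lemma one_mem_Cb (x : B) : (1 : B) ∈ Cb x := by
  rw [mem_Cb_iff, ← SkewBrace.zero_eq_one]
  refine ⟨?_, ?_, ?_⟩ <;> simp [sbMulZero, sbZeroMul]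

lemma mul_mem_Cb {x b c : B} (hb : b ∈ Cb x) (hc : c ∈ Cb x) : b * c ∈ Cb x := by
  rw [mem_Cb_iff] at hb hc ⊢
  obtain ⟨hb1, hb2, hb3⟩ := hb
  obtain ⟨hc1, hc2, hc3⟩ := hc
  have hbx : x * b = b * x := by rw [hb1, hb3, ← hb2]
  have hcx : x * c = c * x := by rw [hc1, hc3, ← hc2]
  have hlb : lambdaMap x b = b := by rw [lambdaMap, hb1, neg_add_cancel_left]
  have hlc : lambdaMap x c = c := by rw [lambdaMap, hc1, neg_add_cancel_left]
  have hl : lambdaMap x (b * c) = b * c := by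
    conv_lhs => rw [mul_eq_add_lam b c]
    rw [lam_add, hlb, ← lam_mul, hbx, lam_mul, hlc, ← mul_eq_add_lam]
  have h1 : x * (b * c) = x + b * c := by rw [mul_eq_add_lam, hl]
  have hmulx : x * (b * c) = (b * c) * x := by
    rw [← mul_assoc, hbx, mul_assoc, hcx, ← mul_assoc]
  have h2 : (b * c) * x = b * c + x := by
    rw [mul_assoc, hc2, sb_compat, hb2, add_assoc, neg_add_cancel_left]
  exact ⟨h1, h2, by rw [← h1, hmulx, h2]⟩

lemma inv_mem_Cb {x b : B} (hb : b ∈ Cb x) : b⁻¹ ∈ Cb x := by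
  rw [mem_Cb_iff] at hb ⊢
  obtain ⟨hb1, hb2, hb3⟩ := hb
  have hbx : x * b = b * x := by rw [hb1, hb3, ← hb2]
  have hlb : lambdaMap x b = b := by rw [lambdaMap, hb1, neg_add_cancel_left]
  have hlone : ∀ z : B, lambdaMap (1 : B) z = z := by
    intro z
    rw [← SkewBrace.zero_eq_one, lambdaMap, sbZeroMul, neg_zero, zero_add]
  have hxinv : x * b⁻¹ = b⁻¹ * x := by
    calc x * b⁻¹ = b⁻¹ * (b * x) * b⁻¹ := by group
      _ = b⁻¹ * (x * b) * b⁻¹ := by rw [hbx]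
      _ = b⁻¹ * x := by group
  have hlbinvx : lambdaMap b⁻¹ x = x := by
    have h := lam_mul b⁻¹ b x
    rw [inv_mul_cancel, hlone] at h
    have hlbx : lambdaMap b x = x := by rw [lambdaMap, hb2, neg_add_cancel_left]
    rw [hlbx] at h
    exact h.symm
  have hbinv_eq : b⁻¹ = -(lambdaMap b⁻¹ b) := by
    have h := lam_mul b⁻¹ b b⁻¹
    rw [inv_mul_cancel, hlone] at h
    have h1 : lambdaMap b b⁻¹ = -b := by
      rw [lambdaMap, mul_inv_cancel, ← SkewBrace.zero_eq_one, add_zero]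
    rw [h1, lam_neg] at h
    exact h
  have hlxbinv : lambdaMap x b⁻¹ = b⁻¹ := by
    conv_lhs => rw [hbinv_eq]
    rw [lam_neg, ← lam_mul, hxinv, lam_mul, hlb, ← hbinv_eq]
  have e1 : x * b⁻¹ = x + b⁻¹ := by rw [mul_eq_add_lam, hlxbinv]
  have e2 : b⁻¹ * x = b⁻¹ + x := by rw [mul_eq_add_lam, hlbinvx]
  exact ⟨e1, e2, by rw [← e1, ← e2, hxinv]⟩

/-- `Cb x` as a subgroup of `(B, ∘)`. -/
def CbSubgroup (x : B) : Subgroup B where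
  carrier := Cb x
  one_mem' := one_mem_Cb x
  mul_mem' := mul_mem_Cb
  inv_mem' := inv_mem_Cb

end Aux

section Aux2

variable {B : Type*} [AddGroup B] [Group B] [SkewBrace B]

lemma zero_mem_Ann : (0 : B) ∈ AnnSet B :=
  ⟨fun b => by rw [zero_add, sbZeroMul],
   fun b => by rw [zero_add, add_zero],
   fun b => by rw [sbZeroMul, sbMulZero]⟩

lemma one_mem_Ann : (1 : B) ∈ AnnSet B := by
  rw [← SkewBrace.zero_eq_one]; exact zero_mem_Ann

lemma mul_mem_Ann {a b : B} (ha : a ∈ AnnSet B) (hb : b ∈ AnnSet B) :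
    a * b ∈ AnnSet B := by
  obtain ⟨ha1, ha2, ha3⟩ := ha
  obtain ⟨hb1, hb2, hb3⟩ := hb
  have hab : a * b = a + b := (ha1 b).symm
  refine ⟨fun c => ?_, fun c => ?_, fun c => ?_⟩
  · rw [mul_assoc, ← ha1 (b * c), ← hb1 c, hab, add_assoc]
  · rw [hab, add_assoc, hb2 c, ← add_assoc, ha2 c, add_assoc]
  · rw [mul_assoc, hb3 c, ← mul_assoc, ha3 c, mul_assoc]

lemma neg_eq_inv_Ann {a : B} (ha : a ∈ AnnSet B) : a⁻¹ = -a := by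
  have h := ha.1 (-a)
  rw [add_neg_cancel, SkewBrace.zero_eq_one] at h
  exact (eq_inv_of_mul_eq_one_right h.symm).symm

lemma inv_mem_Ann {a : B} (ha : a ∈ AnnSet B) : a⁻¹ ∈ AnnSet B := by
  obtain ⟨ha1, ha2, ha3⟩ := ha
  have hinv : a⁻¹ = -a := neg_eq_inv_Ann ⟨ha1, ha2, ha3⟩
  have h3 : ∀ c : B, a⁻¹ * c = c * a⁻¹ := by
    intro c
    calc a⁻¹ * c = a⁻¹ * (c * a) * a⁻¹ := by group
      _ = a⁻¹ * (a * c) * a⁻¹ := by rw [← ha3]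
      _ = c * a⁻¹ := by group
  have h1 : ∀ c : B, a⁻¹ + c = a⁻¹ * c := by
    intro c
    have h : a * (a⁻¹ * c) = c := by
      rw [← mul_assoc, mul_inv_cancel, one_mul]
    rw [← ha1 (a⁻¹ * c)] at h
    have : a⁻¹ * c = -a + c := by
      conv_rhs => rw [← h]
      rw [neg_add_cancel_left]
    rw [this, hinv]
  have h2 : ∀ c : B, a⁻¹ + c = c + a⁻¹ := by
    intro c
    rw [hinv]
    have hc : c = a + (c + -a) := by
      rw [← add_assoc, ha2 c, add_assoc, add_neg_cancel, add_zero]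
    calc -a + c = -a + (a + (c + -a)) := by rw [← hc]
      _ = c + -a := by rw [neg_add_cancel_left]
  exact ⟨h1, h2, h3⟩

/-- `AnnSet B` as a subgroup of `(B, ∘)`. -/
def AnnSubgroup (B : Type*) [AddGroup B] [Group B] [SkewBrace B] : Subgroup B where
  carrier := AnnSet B
  one_mem' := one_mem_Ann
  mul_mem' := mul_mem_Ann
  inv_mem' := inv_mem_Ann

lemma Ann_subset_Cb (x : B) : AnnSet B ⊆ Cb x := by
  intro a ha
  obtain ⟨ha1, ha2, ha3⟩ := ha
  rw [mem_Cb_iff]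
  have hax : a * x = a + x := (ha1 x).symm
  refine ⟨?_, hax, (ha2 x).symm⟩
  rw [← ha3 x, hax, ha2 x]

lemma Ann_le_CbSubgroup (x : B) : AnnSubgroup B ≤ CbSubgroup x := Ann_subset_Cb x

lemma Cb_eq_univ_iff {x : B} : Cb x = Set.univ ↔ x ∈ AnnSet B := by
  constructor
  · intro h
    have hb : ∀ b : B, x * b = x + b ∧ b * x = b + x ∧ x + b = b + x := by
      intro b
      exact mem_Cb_iff.mp (h ▸ Set.mem_univ b)
    exact ⟨fun b => ((hb b).1).symm, fun b => (hb b).2.2,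
      fun b => by rw [(hb b).1, (hb b).2.2, ← (hb b).2.1]⟩
  · intro hx
    obtain ⟨hx1, hx2, hx3⟩ := hx
    apply Set.eq_univ_of_forall
    intro b
    rw [mem_Cb_iff]
    refine ⟨(hx1 b).symm, ?_, hx2 b⟩
    rw [← hx3 b, ← hx1 b, hx2 b]

end Aux2

lemma keyNat {ι : Type*} [DecidableEq ι] (T : Finset ι) (c : ι → ℕ) (n a : ℕ)
    (hpos : 0 < a) (hdvd : a ∣ n) (hcard : T.card + a = n)
    (hc : ∀ x ∈ T, a ∣ c x ∧ c x ∣ n ∧ c x < n) :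
    8 * (a * n + ∑ x ∈ T, c x) = 5 * n ^ 2 ↔
      (n = 4 * a ∧ ∀ x ∈ T, 2 * c x = n) := by
  obtain ⟨m, hm⟩ := hdvd
  have han : a ≤ n := by omega
  have hn0 : 0 < n := by omega
  have hm1 : 1 ≤ m := by nlinarith
  constructor
  · intro h
    have hhalf : ∀ x ∈ T, 2 * c x ≤ n := by
      intro x hx
      obtain ⟨hda, ⟨k, hk⟩, hlt⟩ := hc x hx
      have hk2 : 2 ≤ k := by
        rcases Nat.lt_or_ge k 2 with hk' | hk'
        · interval_cases k <;> omega
        · exact hk'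
      calc 2 * c x = c x * 2 := by ring
        _ ≤ c x * k := Nat.mul_le_mul_left _ hk2
        _ = n := hk.symm
    have hS : 2 * (∑ x ∈ T, c x) ≤ T.card * n := by
      calc 2 * ∑ x ∈ T, c x = ∑ x ∈ T, 2 * c x := Finset.mul_sum _ _ _
        _ ≤ ∑ _x ∈ T, n := Finset.sum_le_sum hhalf
        _ = T.card * n := by rw [Finset.sum_const, smul_eq_mul]
    have hlen : n ≤ 4 * a := by nlinarith [h, hS, hcard, hn0]
    have hm4 : m ≤ 4 := by nlinarith
    -- helper to compute c x given n = a * m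
    interval_cases m
    · -- m = 1 : n = a, T empty
      exfalso
      have hT0 : T.card = 0 := by omega
      have hTe : T = ∅ := Finset.card_eq_zero.mp hT0
      rw [hTe, Finset.sum_empty] at h
      nlinarith
    · -- m = 2
      exfalso
      have hceq : ∀ x ∈ T, c x = a := by
        intro x hx
        obtain ⟨⟨j, hj⟩, hdn, hlt⟩ := hc x hx
        rw [hj, hm] at hdn hlt
        have hj2 : j ∣ 2 := (mul_dvd_mul_iff_left hpos.ne').mp hdn
        have hjle : j ≤ 2 := Nat.le_of_dvd (by norm_num) hj2
        have hj1 : j = 1 := by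
          rcases Nat.lt_or_ge j 1 with h' | h'
          · exfalso; interval_cases j <;> omega
          · interval_cases j
            · rfl
            · exfalso; nlinarith
        rw [hj, hj1, mul_one]
      have hsum : ∑ x ∈ T, c x = T.card * a := by
        rw [Finset.sum_congr rfl hceq, Finset.sum_const, smul_eq_mul]
      rw [hsum] at h
      have hTc : T.card = a := by omega
      rw [hTc, hm] at h
      nlinarith
    · -- m = 3
      exfalso
      have hceq : ∀ x ∈ T, c x = a := by
        intro x hx
        obtain ⟨⟨j, hj⟩, hdn, hlt⟩ := hc x hx
        rw [hj, hm] at hdn hlt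
        have hj2 : j ∣ 3 := (mul_dvd_mul_iff_left hpos.ne').mp hdn
        have hjle : j ≤ 3 := Nat.le_of_dvd (by norm_num) hj2
        interval_cases j
        · exfalso; omega
        · rw [hj, mul_one]
        · exfalso; norm_num at hj2
        · exfalso; nlinarith
      have hsum : ∑ x ∈ T, c x = T.card * a := by
        rw [Finset.sum_congr rfl hceq, Finset.sum_const, smul_eq_mul]
      rw [hsum] at h
      have hTc : T.card = 2 * a := by omega
      rw [hTc, hm] at h
      nlinarith
    · -- m = 4
      have hub : ∀ x ∈ T, c x ≤ 2 * a := by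
        intro x hx
        obtain ⟨⟨j, hj⟩, hdn, hlt⟩ := hc x hx
        rw [hj, hm] at hdn hlt
        have hj2 : j ∣ 4 := (mul_dvd_mul_iff_left hpos.ne').mp hdn
        have hjle : j ≤ 4 := Nat.le_of_dvd (by norm_num) hj2
        interval_cases j
        · exfalso; omega
        · rw [hj]; nlinarith
        · rw [hj]; nlinarith
        · exfalso; norm_num at hj2
        · exfalso; nlinarith
      have hTc : T.card = 3 * a := by omega
      have hSum : ∑ x ∈ T, c x = 6 * a ^ 2 := by nlinarith [h, hm]
      have hall : ∀ x ∈ T, c x = 2 * a := by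
        by_contra hcon
        push_neg at hcon
        obtain ⟨x₀, hx₀, hne⟩ := hcon
        have hlt : ∑ x ∈ T, c x < ∑ _x ∈ T, 2 * a :=
          Finset.sum_lt_sum hub ⟨x₀, hx₀, lt_of_le_of_ne (hub x₀ hx₀) hne⟩
        rw [Finset.sum_const, smul_eq_mul, hTc, hSum] at hlt
        nlinarith
      refine ⟨by omega, fun x hx => ?_⟩
      rw [hall x hx, hm]
      ring
  · rintro ⟨h4, hcx⟩
    have h2S : 2 * ∑ x ∈ T, c x = T.card * n := by
      rw [Finset.mul_sum, Finset.sum_congr rfl hcx, Finset.sum_const, smul_eq_mul]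
    have hTc : T.card = 3 * a := by omega
    rw [hTc, h4] at h2S
    have h2S' : 2 * ∑ x ∈ T, c x = 2 * (6 * a ^ 2) := by rw [h2S]; ring
    have hSum : ∑ x ∈ T, c x = 6 * a ^ 2 :=
      Nat.eq_of_mul_eq_mul_left (by norm_num) h2S'
    rw [hSum, h4]
    ring

/-- `Pb(B) = 5/8` iff `[B : Ann(B)] = 4` and `|Cb_B(x)| = |B|/2` for every
`x ∉ Ann(B)`. -/
theorem stmt12 {B : Type*} [AddGroup B] [Group B] [SkewBrace B] [Finite B] :
    Pb B = 5 / 8 ↔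
      (Nat.card B = 4 * Nat.card (AnnSet B) ∧
       ∀ x : B, x ∉ AnnSet B → 2 * Nat.card (Cb x) = Nat.card B) := by
  classical
  letI : Fintype B := Fintype.ofFinite B
  set n := Nat.card B with hn
  set a := Nat.card (AnnSet B) with ha
  -- numerator equals sum of centralizer cardinalities
  have hnum : Nat.card {p : B × B //
      starOp p.1 p.2 = 0 ∧ starOp p.2 p.1 = 0 ∧ addComB p.1 p.2 = 0}
      = ∑ x : B, Nat.card (Cb x) := by
    have e : {p : B × B //
        starOp p.1 p.2 = 0 ∧ starOp p.2 p.1 = 0 ∧ addComB p.1 p.2 = 0}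
        ≃ (Σ x : B, Cb x) :=
      ⟨fun p => ⟨p.1.1, ⟨p.1.2, p.2⟩⟩, fun s => ⟨(s.1, s.2.1), s.2.2⟩,
        fun p => rfl, fun s => rfl⟩
    rw [Nat.card_congr e, Nat.card_eq_fintype_card, Fintype.card_sigma]
    exact Finset.sum_congr rfl fun x _ => (Nat.card_eq_fintype_card).symm
  have hPb : Pb B = ((∑ x : B, Nat.card (Cb x) : ℕ) : ℚ) / (n : ℚ) ^ 2 := by
    rw [Pb, hnum]
  have hn0 : 0 < n := Nat.card_pos
  haveI : Nonempty (AnnSet B) := ⟨⟨0, zero_mem_Ann⟩⟩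
  have ha0 : 0 < a := Nat.card_pos
  -- the rational identity as a ℕ identity
  have hiff : Pb B = 5 / 8 ↔ 8 * (∑ x : B, Nat.card (Cb x)) = 5 * n ^ 2 := by
    rw [hPb, div_eq_div_iff (by positivity) (by norm_num : (8 : ℚ) ≠ 0)]
    constructor
    · intro h
      have h2 : ((8 * ∑ x : B, Nat.card (Cb x) : ℕ) : ℚ) = ((5 * n ^ 2 : ℕ) : ℚ) := by
        push_cast at h ⊢
        linarith
      exact_mod_cast h2
    · intro h
      have h2 := congrArg (fun t : ℕ => (t : ℚ)) h
      push_cast at h2 ⊢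
      linarith
  -- split the sum
  set T : Finset B := Finset.univ.filter (fun x => x ∉ AnnSet B) with hT
  have hmemT : ∀ x : B, x ∈ T ↔ x ∉ AnnSet B := by
    intro x; simp [hT]
  have hcardAnn : (Finset.univ.filter (fun x => ¬ x ∉ AnnSet B)).card = a := by
    have hfe : Finset.univ.filter (fun x => ¬ x ∉ AnnSet B) = (AnnSet B).toFinset := by
      ext x
      simp [Set.mem_toFinset, not_not]
    rw [hfe, ← Set.ncard_eq_toFinset_card', ← Nat.card_coe_set_eq]
  have hcardAnnset : ∀ x : B, x ∈ AnnSet B → Nat.card (Cb x) = n := by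
    intro x hx
    rw [Cb_eq_univ_iff.mpr hx, hn]
    exact Nat.card_congr (Equiv.Set.univ B)
  have hsplit : ∑ x : B, Nat.card (Cb x)
      = a * n + ∑ x ∈ T, Nat.card (Cb x) := by
    rw [← Finset.sum_filter_add_sum_filter_not Finset.univ
      (fun x => x ∉ AnnSet B) (fun x => Nat.card (Cb x))]
    rw [add_comm]
    congr 1
    calc ∑ x ∈ Finset.univ.filter (fun x => ¬ x ∉ AnnSet B), Nat.card (Cb x)
        = ∑ _x ∈ Finset.univ.filter (fun x => ¬ x ∉ AnnSet B), n :=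
          Finset.sum_congr rfl fun x hx => by
            have := (Finset.mem_filter.mp hx).2
            exact hcardAnnset x (not_not.mp this)
      _ = a * n := by rw [Finset.sum_const, smul_eq_mul, hcardAnn]
  have hTcard : T.card + a = n := by
    have := Finset.card_filter_add_card_filter_not
      (s := Finset.univ) (p := fun x : B => x ∉ AnnSet B)
    rw [hcardAnn] at this
    rw [← hT] at this
    rw [this, Finset.card_univ, hn, Nat.card_eq_fintype_card]
  -- cardinality facts for Subgroups
  have hcardCb : ∀ x : B, Nat.card (Cb x) = Nat.card (CbSubgroup x) := by
    intro x
    exact Nat.card_congr (Equiv.subtypeEquivRight fun b => Iff.rfl)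
  have hcardAnn' : a = Nat.card (AnnSubgroup B) := by
    rw [ha]
    exact Nat.card_congr (Equiv.subtypeEquivRight fun b => Iff.rfl)
  have hcfacts : ∀ x ∈ T, a ∣ Nat.card (Cb x) ∧ Nat.card (Cb x) ∣ n ∧
      Nat.card (Cb x) < n := by
    intro x hx
    have hxnot : x ∉ AnnSet B := (hmemT x).mp hx
    refine ⟨?_, ?_, ?_⟩
    · rw [hcardCb x, hcardAnn']
      exact Subgroup.card_dvd_of_le (Ann_le_CbSubgroup x)
    · rw [hcardCb x, hn]
      exact Subgroup.card_subgroup_dvd_card (CbSubgroup x)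
    · have hss : Cb x ⊂ Set.univ := by
        refine ⟨Set.subset_univ _, fun hsub => ?_⟩
        exact hxnot (Cb_eq_univ_iff.mp (Set.eq_univ_of_univ_subset hsub))
      have := Set.ncard_lt_ncard hss (Set.toFinite _)
      rwa [Set.ncard_univ, ← Nat.card_coe_set_eq, ← hn] at this
  have hkey := keyNat T (fun x => Nat.card (Cb x)) n a ha0
    (by rw [hcardAnn', hn]; exact Subgroup.card_subgroup_dvd_card (AnnSubgroup B))
    hTcard hcfacts
  rw [hiff, hsplit, hkey]
  constructor
  · rintro ⟨h1, h2⟩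
    exact ⟨h1, fun x hx => h2 x ((hmemT x).mpr hx)⟩
  · rintro ⟨h1, h2⟩
    exact ⟨h1, fun x hx => h2 x ((hmemT x).mp hx)⟩
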